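/- Let X : ℕ → ℂ be a sequence of i.i.d. integrable complex random variables with E[|X|²] < ∞, and let ρ ∈ [0,1). Define S_N = ∑_{n₁=1}^{N} ∑_{n₂=1}^{N} ρ^{|n₁-n₂|} X[n₁] · conj(X[n₂]). Then E[S_N] = N·E[|X₁|²] + (2ρ/(1-ρ))·(N - (1-ρ^N)/(1-ρ))·|E[X₁]|². -/

import Mathlib

/-!
By independence, `E[X i * conj (X j)]` equals `E[‖X 1‖²]` for `i = j` and `‖E[X 1]‖²` otherwise,
so `E[S_N] = N E[‖X 1‖²] + (∑_{i ≠ j} ρ^|i-j|) ‖E[X 1]‖²`. The weight sum `∑_{i,j} ρ^|i-j|`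
follows by induction on `N`: passing from `N` to `N + 1` adds `1 + 2 (ρ + ⋯ + ρ^N)`.
-/

open MeasureTheory ProbabilityTheory
open Finset ComplexConjugate

section PowDist

variable {K : Type*} [Field K] {ρ : K}

theorem sum_Icc_sum_Icc_succ {M : Type*} [AddCommMonoid M] (f : ℕ → ℕ → M) (N : ℕ) :
    ∑ i ∈ Icc 1 (N + 1), ∑ j ∈ Icc 1 (N + 1), f i j =
      ∑ i ∈ Icc 1 N, ∑ j ∈ Icc 1 N, f i j + ∑ i ∈ Icc 1 N, (f i (N + 1) + f (N + 1) i) +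
        f (N + 1) (N + 1) := by
  simp_rw [sum_Icc_succ_top (Nat.le_add_left 1 N), sum_add_distrib]
  abel

theorem sum_Icc_pow_dist_succ (hρ : ρ ≠ 1) (N : ℕ) :
    ∑ i ∈ Icc 1 N, ρ ^ Nat.dist i (N + 1) = (ρ - ρ ^ (N + 1)) / (1 - ρ) := by
  have hdist : ∀ i ∈ Icc 1 N, ρ ^ Nat.dist i (N + 1) = ρ ^ (N + 1 - i) := fun i hi => by
    rw [Nat.dist_eq_sub_of_le (by grind)]
  rw [sum_congr rfl hdist, ← Ico_add_one_right_eq_Icc,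
    sum_Ico_reflect (ρ ^ ·) 1 (Nat.le_succ (N + 1)), geom_sum_Ico' hρ (by omega)]
  simp

theorem sum_Icc_sum_Icc_pow_dist (hρ : ρ ≠ 1) (N : ℕ) :
    ∑ i ∈ Icc 1 N, ∑ j ∈ Icc 1 N, ρ ^ Nat.dist i j =
      N + 2 * ρ / (1 - ρ) * (N - (1 - ρ ^ N) / (1 - ρ)) := by
  have hρ' : 1 - ρ ≠ 0 := sub_ne_zero.mpr hρ.symm
  induction N with
  | zero => simp
  | succ N ih =>
    simp_rw [sum_Icc_sum_Icc_succ, ih, sum_add_distrib, Nat.dist_comm (N + 1),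
      sum_Icc_pow_dist_succ hρ, Nat.dist_self]
    field_simp
    push_cast
    ring

theorem sum_Icc_sum_Icc_pow_dist_mul_ite (hρ : ρ ≠ 1) (a b : K) (N : ℕ) :
    ∑ i ∈ Icc 1 N, ∑ j ∈ Icc 1 N, ρ ^ Nat.dist i j * (if i = j then a else b) =
      N * a + 2 * ρ / (1 - ρ) * (N - (1 - ρ ^ N) / (1 - ρ)) * b := by
  have hsplit : ∀ i j, ρ ^ Nat.dist i j * (if i = j then a else b) =
      ρ ^ Nat.dist i j * b + if i = j then a - b else 0 := fun i j => by
    split_ifs with h <;> simp [h]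
  simp_rw [hsplit, sum_add_distrib, ← sum_mul, sum_Icc_sum_Icc_pow_dist hρ, sum_ite_eq]
  rw [sum_ite_mem, inter_self, sum_const, Nat.card_Icc, nsmul_eq_mul]
  push_cast
  ring

end PowDist

namespace ProbabilityTheory

variable {Ω Ω' : Type*} [MeasurableSpace Ω] [MeasurableSpace Ω'] {μ : Measure Ω} {ν : Measure Ω'}

theorem IdentDistrib.integral_mul_conj_self {Z : Ω → ℂ} {Y : Ω' → ℂ} (h : IdentDistrib Z Y μ ν) :
    ∫ ω, Z ω * conj (Z ω) ∂μ = ((∫ ω, ‖Y ω‖ ^ 2 ∂ν : ℝ) : ℂ) := by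
  simp_rw [Complex.mul_conj', ← Complex.ofReal_pow, integral_complex_ofReal]
  exact congrArg _ (h.comp (measurable_norm.pow_const 2)).integral_eq

theorem IndepFun.integral_mul_conj {Z Y : Ω → ℂ} (h : IndepFun Z Y μ)
    (hZ : AEStronglyMeasurable Z μ) (hY : AEStronglyMeasurable Y μ) :
    ∫ ω, Z ω * conj (Y ω) ∂μ = (∫ ω, Z ω ∂μ) * conj (∫ ω, Y ω ∂μ) := by
  rw [← integral_conj]
  exact (h.comp measurable_id Complex.continuous_conj.measurable).integral_fun_mul_eq_mul_integral
    hZ (Complex.continuous_conj.comp_aestronglyMeasurable hY)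

theorem IndepFun.integrable_mul_conj {Z Y : Ω → ℂ} (h : IndepFun Z Y μ)
    (hZ : Integrable Z μ) (hY : Integrable Y μ) :
    Integrable (fun ω => Z ω * conj (Y ω)) μ :=
  (h.comp measurable_id Complex.continuous_conj.measurable).integrable_mul hZ
    (Complex.conjCLE.toContinuousLinearMap.integrable_comp hY)

variable {X : ℕ → Ω → ℂ} {Y : Ω → ℂ}

theorem integrable_mul_conj_of_iIndepFun (hindep : iIndepFun X μ)
    (hid : ∀ n, IdentDistrib (X n) Y μ μ) (hY : Integrable Y μ)
    (hY2 : Integrable (fun ω => ‖Y ω‖ ^ 2) μ) (i j : ℕ) :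
    Integrable (fun ω => X i ω * conj (X j ω)) μ := by
  rcases eq_or_ne i j with rfl | hij
  · simp_rw [Complex.mul_conj', ← Complex.ofReal_pow]
    exact ((hid i).comp (measurable_norm.pow_const 2)).integrable_iff.mpr hY2 |>.ofReal
  · exact (hindep.indepFun hij).integrable_mul_conj ((hid i).integrable_iff.mpr hY)
      ((hid j).integrable_iff.mpr hY)

theorem integral_mul_conj_of_iIndepFun (hindep : iIndepFun X μ)
    (hid : ∀ n, IdentDistrib (X n) Y μ μ) (hY : AEStronglyMeasurable Y μ) (i j : ℕ) :
    ∫ ω, X i ω * conj (X j ω) ∂μ =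
      if i = j then ((∫ ω, ‖Y ω‖ ^ 2 ∂μ : ℝ) : ℂ) else ((‖∫ ω, Y ω ∂μ‖ ^ 2 : ℝ) : ℂ) := by
  split_ifs with hij
  · exact hij ▸ (hid i).integral_mul_conj_self
  · rw [(hindep.indepFun hij).integral_mul_conj ((hid i).aestronglyMeasurable_iff.mpr hY)
      ((hid j).aestronglyMeasurable_iff.mpr hY), (hid i).integral_eq, (hid j).integral_eq,
      Complex.mul_conj']
    push_cast
    rfl

end ProbabilityTheory

theorem stmt_4_general {Ω : Type*} [MeasureSpace Ω] [IsProbabilityMeasure (ℙ : Measure Ω)]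
    (X : ℕ → Ω → ℂ)
    (hindep : iIndepFun X ℙ)
    (hid : ∀ n, IdentDistrib (X n) (X 1) ℙ ℙ)
    (hint : Integrable (X 1) ℙ)
    (hint2 : Integrable (fun ω => ‖X 1 ω‖ ^ 2) ℙ)
    (ρ : ℝ) (hρ1 : ρ < 1) (N : ℕ) :
    ∫ ω, (∑ n₁ ∈ Finset.Icc 1 N, ∑ n₂ ∈ Finset.Icc 1 N,
        (ρ : ℂ) ^ (Nat.dist n₁ n₂) * X n₁ ω * (starRingEnd ℂ) (X n₂ ω)) ∂ℙ =
      (N : ℂ) * ((∫ ω, ‖X 1 ω‖ ^ 2 ∂ℙ : ℝ) : ℂ) +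
        (((2 * ρ / (1 - ρ)) * ((N : ℝ) - (1 - ρ ^ N) / (1 - ρ)) : ℝ) : ℂ) *
          ((‖∫ ω, X 1 ω ∂ℙ‖ ^ 2 : ℝ) : ℂ) := by
  have hterm := integrable_mul_conj_of_iIndepFun hindep hid hint hint2
  calc _ = ∑ i ∈ Icc 1 N, ∑ j ∈ Icc 1 N,
          (ρ : ℂ) ^ Nat.dist i j * ∫ ω, X i ω * conj (X j ω) := by
        simp_rw [mul_assoc]
        rw [integral_finsetSum _ fun i _ =>
          integrable_finsetSum _ fun j _ => (hterm i j).const_mul _]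
        refine sum_congr rfl fun i _ => ?_
        rw [integral_finsetSum _ fun j _ => (hterm i j).const_mul _]
        simp_rw [integral_const_mul]
    _ = _ := by
        simp_rw [integral_mul_conj_of_iIndepFun hindep hid hint.aestronglyMeasurable]
        rw [sum_Icc_sum_Icc_pow_dist_mul_ite (by exact_mod_cast hρ1.ne)]
        push_cast
        ring

theorem stmt_4 {Ω : Type*} [MeasureSpace Ω] [IsProbabilityMeasure (ℙ : Measure Ω)]
    (X : ℕ → Ω → ℂ)
    (hindep : iIndepFun X ℙ)
    (hid : ∀ n, IdentDistrib (X n) (X 1) ℙ ℙ)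
    (hint : Integrable (X 1) ℙ)
    (hint2 : Integrable (fun ω => ‖X 1 ω‖ ^ 2) ℙ)
    (ρ : ℝ) (hρ0 : 0 ≤ ρ) (hρ1 : ρ < 1) (N : ℕ) :
    ∫ ω, (∑ n₁ ∈ Finset.Icc 1 N, ∑ n₂ ∈ Finset.Icc 1 N,
        (ρ : ℂ) ^ (Nat.dist n₁ n₂) * X n₁ ω * (starRingEnd ℂ) (X n₂ ω)) ∂ℙ =
      (N : ℂ) * ((∫ ω, ‖X 1 ω‖ ^ 2 ∂ℙ : ℝ) : ℂ) +
        (((2 * ρ / (1 - ρ)) * ((N : ℝ) - (1 - ρ ^ N) / (1 - ρ)) : ℝ) : ℂ) *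
          ((‖∫ ω, X 1 ω ∂ℙ‖ ^ 2 : ℝ) : ℂ) :=
  stmt_4_general X hindep hid hint hint2 ρ hρ1 N
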